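/- Suppose f : A^n → B depends on all of its n variables (A finite, |A| ≥ 2). For every m with 0 ≤ m ≤ n − 3: gap f = n − m if and only if qa f = m. -/

import Mathlib

/-!
Identifying two variables never increases the essential arity, and every support of `f` has
the same identification minors as `f`; so the largest essential arity `μ` of a minor
`f_{i←j}` is at most `qa f`. Conversely, if a support has an inessential variable `i`,
identifying `i` with any `j` leaves it unchanged, so `qa f = μ` as soon as `qa f < n`. As `f`
depends on all `n` variables, `gap f = n - μ`. Everything thus reduces to: if every minor has
at most `n - 3` essential variables, then `f` restricted to `A^n_=` ignores some variable `p`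
(and then `f_{p←q}` is a support with fewer than `n` essential variables).

For `n = 3` all minors are constant, hence so is `f` on `A^n_=`. For `n ≥ 4`, the bound on the
minors says that every slice `x_r = x_s` has an outsider `z` on which `f` does not depend
there. Call `c` an anchor of `k` if `k` is essential on every slice `x_c = x_w`. An outsider
of a slice on which `k` is essential is an anchor of `k`, and this lets one enlarge any set of
variables with two common anchors by a new variable keeping two common anchors, unless every
variable is in the set or a common anchor and no common anchor anchors another. In that case
no common anchor is essential on any slice, which is impossible for three of them: a variable
essential on `A^n_=` but on no slice forces every variable except itself and one other to be
essential on some slice, by a chain of one-coordinate changes inside `A^n_=`. So sets with two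
common anchors would be arbitrarily large.
-/

/-- Variable `i` is essential in `f`. -/
def EssAt {A B : Type*} {n : ℕ} (f : (Fin n → A) → B) (i : Fin n) : Prop :=
  ∃ a b : Fin n → A, (∀ j, j ≠ i → a j = b j) ∧ f a ≠ f b

/-- The essential arity of `f`: the number of essential variables. -/
noncomputable def essArity {A B : Type*} {n : ℕ} (f : (Fin n → A) → B) : ℕ :=
  Set.ncard {i : Fin n | EssAt f i}

/-- `A^n_=`: tuples with at least two equal coordinates (all of `A` when `n = 1`). -/
def Aneq (A : Type*) (n : ℕ) : Set (Fin n → A) :=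
  {a | n = 1 ∨ ∃ i j : Fin n, i ≠ j ∧ a i = a j}

/-- Variable `i` is essential in the restriction of `f` to `S` (witnesses must lie in `S`). -/
def EssAtOn {A B : Type*} {n : ℕ} (f : (Fin n → A) → B) (S : Set (Fin n → A)) (i : Fin n) : Prop :=
  ∃ a b : Fin n → A, a ∈ S ∧ b ∈ S ∧ (∀ j, j ≠ i → a j = b j) ∧ f a ≠ f b

/-- Essential arity of the restriction of `f` to `S`. -/
noncomputable def essArityOn {A B : Type*} {n : ℕ} (f : (Fin n → A) → B)
    (S : Set (Fin n → A)) : ℕ :=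
  Set.ncard {i : Fin n | EssAtOn f S i}

/-- `g` is a support of `f`: they agree on `A^n_=`. -/
def IsSupport {A B : Type*} {n : ℕ} (f g : (Fin n → A) → B) : Prop :=
  ∀ a ∈ Aneq A n, g a = f a

/-- The quasi-arity of `f`: minimum essential arity of a support of `f`. -/
noncomputable def qarity {A B : Type*} {n : ℕ} (f : (Fin n → A) → B) : ℕ :=
  sInf {m | ∃ g : (Fin n → A) → B, IsSupport f g ∧ essArity g = m}

/-- The variable identification minor `f_{i ← j}`: substitute `x_j` for `x_i`. -/
def idMinor {A B : Type*} {n : ℕ} (f : (Fin n → A) → B) (i j : Fin n) :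
    (Fin n → A) → B :=
  fun a => f (Function.update a i (a j))

/-- The arity gap of `f`: minimum of `ess f - ess f_{i←j}` over pairs of distinct
essential variables. -/
noncomputable def arityGap {A B : Type*} {n : ℕ} (f : (Fin n → A) → B) : ℕ :=
  sInf {d | ∃ i j : Fin n, i ≠ j ∧ EssAt f i ∧ EssAt f j ∧
    d = essArity f - essArity (idMinor f i j)}

open Function

section EssentialArity

variable {A B : Type*} {n : ℕ}

lemma essArity_lt_of_not_essAt {g : (Fin n → A) → B} {i : Fin n} (hi : ¬ EssAt g i) :
    essArity g < n := by
  have h : {k : Fin n | EssAt g k} ≠ Set.univ := fun h => hi (h.symm.subset (Set.mem_univ i))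
  simpa [essArity] using Set.ncard_lt_card h

lemma essArity_eq_of_forall_essAt {f : (Fin n → A) → B} (hdep : ∀ i, EssAt f i) :
    essArity f = n := by
  simp [essArity, hdep]

lemma not_essAt_idMinor_self (g : (Fin n → A) → B) {i j : Fin n} (hij : i ≠ j) :
    ¬ EssAt (idMinor g i j) i := by
  rintro ⟨a, b, hab, hne⟩
  refine hne (congrArg g (funext fun k => ?_))
  rcases eq_or_ne k i with rfl | hk
  · simp [hab j hij.symm]
  · simp [update_of_ne hk, hab k hk]

lemma essAt_of_essAt_idMinor {g : (Fin n → A) → B} {i j k : Fin n} (hki : k ≠ i) (hkj : k ≠ j)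
    (h : EssAt (idMinor g i j) k) : EssAt g k := by
  obtain ⟨a, b, hab, hne⟩ := h
  refine ⟨update a i (a j), update b i (b j), fun l hl => ?_, hne⟩
  rcases eq_or_ne l i with rfl | hli
  · simp [hab j hkj.symm]
  · simp [update_of_ne hli, hab l hl]

lemma essAt_or_essAt_of_essAt_idMinor {g : (Fin n → A) → B} {i j : Fin n} (hij : i ≠ j)
    (h : EssAt (idMinor g i j) j) : EssAt g i ∨ EssAt g j := by
  by_contra! hcon
  obtain ⟨a, b, hab, hne⟩ := h
  simp only [EssAt, not_exists, not_and, not_not] at hcon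
  have hj : g (update a i (a j)) = g (update (update a i (a j)) j (b j)) :=
    hcon.2 _ _ fun l hl => (update_of_ne hl _ _).symm
  have hi : g (update (update a i (a j)) j (b j)) = g (update b i (b j)) := by
    refine hcon.1 _ _ fun l hl => ?_
    rcases eq_or_ne l j with rfl | hlj
    · simp [update_of_ne hij.symm]
    · simp [update_of_ne hlj, update_of_ne hl, hab l hlj]
  exact hne (hj.trans hi)

lemma essArity_idMinor_le (g : (Fin n → A) → B) {i j : Fin n} (hij : i ≠ j) :
    essArity (idMinor g i j) ≤ essArity g := by
  set E' := {k : Fin n | EssAt (idMinor g i j) k}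
  set E := {k : Fin n | EssAt g k}
  have hne_i : ∀ k ∈ E', k ≠ i := by
    rintro k hk rfl
    exact not_essAt_idMinor_self g hij hk
  by_cases hj : j ∈ E' ∧ j ∉ E
  · have hi : i ∈ E := (essAt_or_essAt_of_essAt_idMinor hij hj.1).resolve_right hj.2
    have hsub : E' ⊆ insert j (E \ {i}) := by
      intro k hk
      rcases eq_or_ne k j with rfl | hkj
      · exact Set.mem_insert k _
      · exact Or.inr ⟨essAt_of_essAt_idMinor (hne_i k hk) hkj hk, hne_i k hk⟩
    calc E'.ncard ≤ (insert j (E \ {i})).ncard := Set.ncard_le_ncard hsub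
      _ ≤ (E \ {i}).ncard + 1 := Set.ncard_insert_le _ _
      _ = E.ncard := Set.ncard_sdiff_singleton_add_one hi
  · refine Set.ncard_le_ncard fun k hk => ?_
    rcases eq_or_ne k j with rfl | hkj
    · exact not_and_not_right.mp hj hk
    · exact essAt_of_essAt_idMinor (hne_i k hk) hkj hk

lemma apply_eq_of_essArity_eq_zero {g : (Fin n → A) → B} (h : essArity g = 0) (a b : Fin n → A) :
    g a = g b := by
  have hg : ∀ i, ¬ EssAt g i :=
    Set.eq_empty_iff_forall_notMem.mp ((Set.ncard_eq_zero (Set.toFinite _)).mp h)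
  have key : ∀ s : Finset (Fin n), ∀ a b : Fin n → A, (∀ i ∉ s, a i = b i) → g a = g b := by
    intro s
    induction s using Finset.induction_on with
    | empty => exact fun a b hab => congrArg g (funext fun i => hab i (Finset.notMem_empty i))
    | insert i s _ ih =>
      intro a b hab
      have hi : g a = g (update a i (b i)) := by
        by_contra hne
        exact hg i ⟨a, update a i (b i), fun j hj => (update_of_ne hj _ _).symm, hne⟩
      refine hi.trans (ih _ _ fun j hj => ?_)
      rcases eq_or_ne j i with rfl | hji
      · simp
      · simp [update_of_ne hji, hab j (by simp [hj, hji])]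
  exact key Finset.univ a b (by simp)

end EssentialArity

section Quasiarity

variable {A B : Type*} {n : ℕ}

lemma update_mem_Aneq (a : Fin n → A) {i j : Fin n} (hij : i ≠ j) :
    update a i (a j) ∈ Aneq A n :=
  Or.inr ⟨i, j, hij, by simp [update_of_ne hij.symm]⟩

lemma IsSupport.idMinor_eq {f g : (Fin n → A) → B} (hg : IsSupport f g) {i j : Fin n}
    (hij : i ≠ j) : idMinor f i j = idMinor g i j :=
  funext fun a => (hg _ (update_mem_Aneq a hij)).symm

lemma idMinor_eq_self_of_not_essAt {g : (Fin n → A) → B} {i : Fin n} (j : Fin n)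
    (hi : ¬ EssAt g i) : idMinor g i j = g := by
  refine funext fun a => ?_
  by_contra hne
  exact hi ⟨_, _, fun l hl => update_of_ne hl _ _, hne⟩

lemma exists_isSupport_essArity_eq_qarity (f : (Fin n → A) → B) :
    ∃ g : (Fin n → A) → B, IsSupport f g ∧ essArity g = qarity f :=
  Nat.sInf_mem (s := {m | ∃ g, IsSupport f g ∧ essArity g = m}) ⟨_, f, fun _ _ => rfl, rfl⟩

lemma qarity_le_essArity {f g : (Fin n → A) → B} (hg : IsSupport f g) :
    qarity f ≤ essArity g :=
  Nat.sInf_le ⟨g, hg, rfl⟩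

lemma essArity_idMinor_le_qarity (f : (Fin n → A) → B) {i j : Fin n} (hij : i ≠ j) :
    essArity (idMinor f i j) ≤ qarity f := by
  obtain ⟨g, hg, hge⟩ := exists_isSupport_essArity_eq_qarity f
  rw [hg.idMinor_eq hij, ← hge]
  exact essArity_idMinor_le g hij

lemma exists_essArity_idMinor_eq_qarity (f : (Fin n → A) → B) (hn : 2 ≤ n)
    (hq : qarity f < n) : ∃ i j : Fin n, i ≠ j ∧ essArity (idMinor f i j) = qarity f := by
  obtain ⟨g, hg, hge⟩ := exists_isSupport_essArity_eq_qarity f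
  obtain ⟨i, hi⟩ : ∃ i, ¬ EssAt g i := by
    by_contra! hall
    exact hq.ne (hge ▸ essArity_eq_of_forall_essAt hall)
  have : Nontrivial (Fin n) := Fin.nontrivial_iff_two_le.mpr hn
  obtain ⟨j, hji⟩ := exists_ne i
  exact ⟨i, j, hji.symm, by rw [hg.idMinor_eq hji.symm, idMinor_eq_self_of_not_essAt j hi, hge]⟩

lemma qarity_lt_of_not_essAtOn {f : (Fin n → A) → B} (hn : 2 ≤ n) {p : Fin n}
    (hp : ¬ EssAtOn f (Aneq A n) p) : qarity f < n := by
  have : Nontrivial (Fin n) := Fin.nontrivial_iff_two_le.mpr hn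
  obtain ⟨q, hqp⟩ := exists_ne p
  have hsupp : IsSupport f (idMinor f p q) := by
    intro a ha
    by_contra hne
    exact hp ⟨_, a, update_mem_Aneq a hqp.symm, ha, fun l hl => update_of_ne hl _ _, hne⟩
  exact (qarity_le_essArity hsupp).trans_lt
    (essArity_lt_of_not_essAt (not_essAt_idMinor_self f hqp.symm))

end Quasiarity

section Slices

variable {A B : Type*} {n : ℕ}

/-- Only the first witness is required to lie on the slice `x r = x s`; when `k ∉ {r, s}`,
as in every use below, so does the second. -/
def EssAtSlice (f : (Fin n → A) → B) (k r s : Fin n) : Prop :=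
  ∃ a b : Fin n → A, a r = a s ∧ (∀ j, j ≠ k → a j = b j) ∧ f a ≠ f b

def EssAtSomeSlice (f : (Fin n → A) → B) (k : Fin n) : Prop :=
  ∃ r s : Fin n, r ≠ s ∧ k ≠ r ∧ k ≠ s ∧ EssAtSlice f k r s

variable {f : (Fin n → A) → B}

lemma EssAtSlice.symm {k r s : Fin n} (h : EssAtSlice f k r s) : EssAtSlice f k s r :=
  let ⟨a, b, hrs, hab, hne⟩ := h
  ⟨a, b, hrs.symm, hab, hne⟩

lemma EssAtSlice.essAt_idMinor {k r s : Fin n} (h : EssAtSlice f k r s) (hkr : k ≠ r)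
    (hks : k ≠ s) : EssAt (idMinor f r s) k := by
  obtain ⟨a, b, hrs, hab, hne⟩ := h
  have hb : b r = b s := by rw [← hab r hkr.symm, ← hab s hks.symm, hrs]
  refine ⟨a, b, hab, ?_⟩
  simpa [idMinor, ← hrs, ← hb] using hne

lemma exists_not_essAtSlice (hminor : ∀ i j : Fin n, i ≠ j → essArity (idMinor f i j) + 3 ≤ n)
    {r s : Fin n} (hrs : r ≠ s) : ∃ z, z ≠ r ∧ z ≠ s ∧ ¬ EssAtSlice f z r s := by
  by_contra! hall
  have hsub : ({r, s}ᶜ : Set (Fin n)) ⊆ {k | EssAt (idMinor f r s) k} := by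
    intro k hk
    simp only [Set.mem_compl_iff, Set.mem_insert_iff, Set.mem_singleton_iff, not_or] at hk
    exact (hall k hk.1 hk.2).essAt_idMinor hk.1 hk.2
  have hn : 2 ≤ n := Fin.nontrivial_iff_two_le.mp ⟨r, s, hrs⟩
  have hcard : n - 2 ≤ essArity (idMinor f r s) := by
    have := Set.ncard_le_ncard hsub
    rwa [Set.ncard_compl, Set.ncard_pair hrs, Nat.card_eq_fintype_card, Fintype.card_fin] at this
  have := hminor r s hrs
  omega

lemma EssAtSlice.essAtSlice_or_essAtSlice {k r s t w : Fin n} (h : EssAtSlice f k r s)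
    (hkr : k ≠ r) (hks : k ≠ s) (htr : t ≠ r) (hts : t ≠ s) (htk : t ≠ k) (hwk : w ≠ k)
    (hwt : w ≠ t) : EssAtSlice f k t w ∨ EssAtSlice f t r s := by
  obtain ⟨a, b, hrs, hab, hne⟩ := h
  by_cases hcd : f (update a t (a w)) = f (update b t (b w))
  · right
    by_cases hac : f a = f (update a t (a w))
    · have hb : b r = b s := by rw [← hab r hkr.symm, ← hab s hks.symm, hrs]
      exact ⟨b, _, hb, fun j hj => (update_of_ne hj _ _).symm,
        fun hbd => hne (hac.trans (hcd.trans hbd.symm))⟩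
    · exact ⟨a, _, hrs, fun j hj => (update_of_ne hj _ _).symm, hac⟩
  · left
    refine ⟨_, _, by simp [update_of_ne hwt], fun j hj => ?_, hcd⟩
    rcases eq_or_ne j t with rfl | hjt
    · simp [hab w hwk]
    · simp [update_of_ne hjt, hab j hj]

lemma apply_eq_of_not_essAtSomeSlice {c p q : Fin n} (hc : ¬ EssAtSomeSlice f c) (hpq : p ≠ q)
    (hcp : c ≠ p) (hcq : c ≠ q) {x y : Fin n → A} (hxy : ∀ j, j ≠ c → x j = y j)
    (hx : x p = x q) : f x = f y := by
  by_contra hne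
  exact hc ⟨p, q, hpq, hcp, hcq, x, y, hx, hxy, hne⟩

end Slices

lemma Fin.exists_ne_ne_ne {n : ℕ} (hn : 4 ≤ n) (a b c : Fin n) : ∃ t, t ≠ a ∧ t ≠ b ∧ t ≠ c := by
  have hcard : ({a, b, c} : Finset (Fin n)).card < (Finset.univ : Finset (Fin n)).card := by
    simpa using Finset.card_le_three.trans_lt (by omega : 3 < n)
  obtain ⟨t, -, ht⟩ := Finset.exists_mem_notMem_of_card_lt_card hcard
  simp only [Finset.mem_insert, Finset.mem_singleton, not_or] at ht
  exact ⟨t, ht⟩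

section SliceChains

variable {A B : Type*} {n : ℕ} {f : (Fin n → A) → B}

lemma EssAtOn.exists_update_witness (hn : n ≠ 1) {k : Fin n} (hk : EssAtOn f (Aneq A n) k)
    (hk' : ¬ EssAtSomeSlice f k) : ∃ (a : Fin n → A) (r s : Fin n), r ≠ s ∧ k ≠ r ∧ k ≠ s ∧
      a k = a r ∧ f a ≠ f (update a k (a s)) := by
  obtain ⟨a, b, ha, hb, hab, hne⟩ := hk
  have pair : ∀ x y : Fin n → A, x ∈ Aneq A n → (∀ j, j ≠ k → x j = y j) → f x ≠ f y →
      ∃ r, k ≠ r ∧ x k = x r := by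
    rintro x y (h1 | ⟨i, j, hij, hx⟩) hxy hne
    · exact absurd h1 hn
    · rcases eq_or_ne i k with rfl | hik
      · exact ⟨j, hij, hx⟩
      rcases eq_or_ne j k with rfl | hjk
      · exact ⟨i, hij.symm, hx.symm⟩
      exact absurd (apply_eq_of_not_essAtSomeSlice hk' hij hik.symm hjk.symm hxy hx) hne
  obtain ⟨r, hkr, hr⟩ := pair a b ha hab hne
  obtain ⟨s, hks, hs⟩ := pair b a hb (fun j hj => (hab j hj).symm) (Ne.symm hne)
  have hb : b = update a k (a s) := by
    funext j
    rcases eq_or_ne j k with rfl | hjk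
    · simp [hs, hab s hks.symm]
    · simp [update_of_ne hjk, hab j hjk]
  refine ⟨a, r, s, ?_, hkr, hks, hr, hb ▸ hne⟩
  rintro rfl
  exact hne (by rw [hb, ← hr, update_eq_self])

variable {a : Fin n → A} {k r s t : Fin n}

lemma apply_update_eq_of_not_essAtSomeSlice_outside (hkr : k ≠ r) (hks : k ≠ s) (htk : t ≠ k)
    (htr : t ≠ r) (hts : t ≠ s) (hr : a k = a r) (hk : ¬ EssAtSomeSlice f k)
    (ht : ¬ EssAtSomeSlice f t) : f a = f (update a k (a s)) :=
  calc f a = f (update a t (a k)) :=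
        apply_eq_of_not_essAtSomeSlice ht hkr htk htr (fun j hj => by simp [update_of_ne hj]) hr
    _ = f (update (update a t (a k)) k (a s)) :=
        apply_eq_of_not_essAtSomeSlice hk htr htk.symm hkr
          (fun j hj => by simp [update_of_ne hj]) (by simp [update_of_ne htr.symm, hr])
    _ = f (update a k (a s)) :=
        apply_eq_of_not_essAtSomeSlice ht hks htk hts
          (fun j hj => by simp [update_apply, hj]) (by simp [update_of_ne hks.symm, hts.symm])

lemma apply_update_eq_of_not_essAtSomeSlice_pair (hrs : r ≠ s) (hkr : k ≠ r) (hks : k ≠ s)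
    (htk : t ≠ k) (htr : t ≠ r) (hts : t ≠ s) (hr : a k = a r) (hk : ¬ EssAtSomeSlice f k)
    (hr' : ¬ EssAtSomeSlice f r) (hs' : ¬ EssAtSomeSlice f s) :
    f a = f (update a k (a s)) :=
  calc f a = f (update a s (a k)) :=
        apply_eq_of_not_essAtSomeSlice hs' hkr hks.symm hrs.symm
          (fun j hj => by simp [update_of_ne hj]) hr
    _ = f (update (update a s (a k)) k (a t)) :=
        apply_eq_of_not_essAtSomeSlice hk hrs hkr hks
          (fun j hj => by simp [update_of_ne hj]) (by simp [update_of_ne hrs, hr])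
    _ = f (update a k (a t)) :=
        apply_eq_of_not_essAtSomeSlice hs' htk.symm hks.symm hts.symm
          (fun j hj => by simp [update_apply, hj]) (by simp [update_of_ne htk, update_of_ne hts])
    _ = f (update (update a k (a t)) r (a s)) :=
        apply_eq_of_not_essAtSomeSlice hr' htk.symm hkr.symm htr.symm
          (fun j hj => by simp [update_of_ne hj]) (by simp [htk])
    _ = f (update (update a r (a s)) k (a s)) :=
        apply_eq_of_not_essAtSomeSlice hk hrs hkr hks
          (fun j hj => by simp [update_apply, hj])
          (by simp [update_of_ne hrs.symm, update_of_ne hks.symm])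
    _ = f (update a k (a s)) :=
        apply_eq_of_not_essAtSomeSlice hr' hks hkr.symm hrs
          (fun j hj => by simp [update_apply, hj])
          (by simp [update_of_ne hks.symm, update_of_ne hrs.symm])

lemma exists_setOf_not_essAtSomeSlice_subset_pair (hn : 4 ≤ n) {k : Fin n}
    (hk : EssAtOn f (Aneq A n) k) (hk' : ¬ EssAtSomeSlice f k) :
    ∃ r, {t | ¬ EssAtSomeSlice f t} ⊆ {k, r} := by
  obtain ⟨a, r, s, hrs, hkr, hks, hr, hne⟩ := hk.exists_update_witness (by omega) hk'
  have hout : ∀ t, ¬ EssAtSomeSlice f t → t = k ∨ t = r ∨ t = s := by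
    intro t ht
    by_contra! h
    exact hne (apply_update_eq_of_not_essAtSomeSlice_outside hkr hks h.1 h.2.1 h.2.2 hr hk' ht)
  obtain ⟨t, htk, htr, hts⟩ := Fin.exists_ne_ne_ne hn k r s
  have hpair : EssAtSomeSlice f r ∨ EssAtSomeSlice f s := by
    by_contra! h
    exact hne (apply_update_eq_of_not_essAtSomeSlice_pair hrs hkr hks htk htr hts hr hk' h.1 h.2)
  rcases hpair with h | h
  · refine ⟨s, fun t ht => ?_⟩
    rcases hout t ht with rfl | rfl | rfl
    exacts [Or.inl rfl, absurd h ht, Or.inr rfl]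
  · refine ⟨r, fun t ht => ?_⟩
    rcases hout t ht with rfl | rfl | rfl
    exacts [Or.inl rfl, Or.inr rfl, absurd h ht]

end SliceChains

section Anchors

variable {A B : Type*} {n : ℕ}

def anchors (f : (Fin n → A) → B) (k : Fin n) : Set (Fin n) :=
  {c | c ≠ k ∧ ∀ w, w ≠ k → w ≠ c → EssAtSlice f k c w}

def commonAnchors (f : (Fin n → A) → B) (S : Finset (Fin n)) : Set (Fin n) :=
  {u | ∀ k ∈ S, u ∈ anchors f k}

variable {f : (Fin n → A) → B} {S : Finset (Fin n)} {k p q ν : Fin n}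

lemma commonAnchors_insert :
    commonAnchors f (insert k S) = anchors f k ∩ commonAnchors f S := by
  ext u
  simp [commonAnchors]

lemma mem_anchors_of_essAtSlice (h : EssAtSlice f k p q) (hkp : k ≠ p) (hkq : k ≠ q)
    (hνp : ν ≠ p) (hνq : ν ≠ q) (hν : ¬ EssAtSlice f ν p q) : ν ∈ anchors f k := by
  have hνk : ν ≠ k := by
    rintro rfl
    exact hν h
  exact ⟨hνk, fun w hwk hwν =>
    (h.essAtSlice_or_essAtSlice hkp hkq hνp hνq hνk hwk hwν).resolve_right hν⟩

lemma essAtSlice_of_mem_commonAnchors (hk : k ∈ S) (hp : p ∈ commonAnchors f S)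
    (hq : q ∈ commonAnchors f S) (hpq : p ≠ q) : EssAtSlice f k p q :=
  (hp k hk).2 q (hq k hk).1 hpq.symm

lemma mem_commonAnchors_of_not_essAtSlice (hp : p ∈ commonAnchors f S)
    (hq : q ∈ commonAnchors f S) (hpq : p ≠ q) (hνp : ν ≠ p) (hνq : ν ≠ q)
    (hν : ¬ EssAtSlice f ν p q) : ν ∈ commonAnchors f S := fun k hk =>
  mem_anchors_of_essAtSlice (essAtSlice_of_mem_commonAnchors hk hp hq hpq) (hp k hk).1.symm
    (hq k hk).1.symm hνp hνq hν

section FreeOutsiders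

variable (hfree : ∀ r s : Fin n, r ≠ s → ∃ z, z ≠ r ∧ z ≠ s ∧ ¬ EssAtSlice f z r s)
include hfree

lemma EssAtSomeSlice.exists_mem_anchors (h : EssAtSomeSlice f k) : ∃ c, c ∈ anchors f k := by
  obtain ⟨r, s, hrs, hkr, hks, h⟩ := h
  obtain ⟨z, hzr, hzs, hz⟩ := hfree r s hrs
  exact ⟨z, mem_anchors_of_essAtSlice h hkr hks hzr hzs hz⟩

lemma exists_third_mem_commonAnchors (hp : p ∈ commonAnchors f S)
    (hq : q ∈ commonAnchors f S) (hpq : p ≠ q) :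
    ∃ ν ∈ commonAnchors f S, ν ≠ p ∧ ν ≠ q := by
  obtain ⟨ν, hνp, hνq, hν⟩ := hfree p q hpq
  exact ⟨ν, mem_commonAnchors_of_not_essAtSlice hp hq hpq hνp hνq hν, hνp, hνq⟩

lemma exists_mem_anchors_inter_commonAnchors (hp : p ∈ commonAnchors f S)
    (hq : q ∈ commonAnchors f S) (hpq : p ≠ q) (hkp : k ≠ p) (hkq : k ≠ q)
    (h : EssAtSlice f k p q) : ∃ ν ∈ anchors f k ∩ commonAnchors f S, ν ≠ p ∧ ν ≠ q := by
  obtain ⟨ν, hνp, hνq, hν⟩ := hfree p q hpq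
  exact ⟨ν, ⟨mem_anchors_of_essAtSlice h hkp hkq hνp hνq hν,
    mem_commonAnchors_of_not_essAtSlice hp hq hpq hνp hνq hν⟩, hνp, hνq⟩

lemma nontrivial_anchors_inter_commonAnchors (hp : p ∈ commonAnchors f S)
    (hq : q ∈ commonAnchors f S) (hpq : p ≠ q) (hkp : k ≠ p) (hkq : k ≠ q)
    (h : ∀ ν ∈ commonAnchors f S, ν ≠ p → ν ≠ k → EssAtSlice f k p ν) :
    (anchors f k ∩ commonAnchors f S).Nontrivial := by
  obtain ⟨ν₁, hν₁, hν₁p, -⟩ :=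
    exists_mem_anchors_inter_commonAnchors hfree hp hq hpq hkp hkq (h q hq hpq.symm hkq.symm)
  have hkν₁ : k ≠ ν₁ := hν₁.1.1.symm
  obtain ⟨ν₂, hν₂, -, hν₂ν₁⟩ := exists_mem_anchors_inter_commonAnchors hfree hp hν₁.2
    hν₁p.symm hkp hkν₁ (h ν₁ hν₁.2 hν₁p hkν₁.symm)
  exact ⟨ν₁, hν₁, ν₂, hν₂, hν₂ν₁.symm⟩

section Saturated

variable (hcover : ∀ z, z ∈ S ∨ z ∈ commonAnchors f S)
  (hsep : ∀ u ∈ commonAnchors f S, ∀ v ∈ anchors f u, v ∉ commonAnchors f S)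
include hcover hsep

lemma not_essAtSomeSlice_of_mem_commonAnchors (hU : (commonAnchors f S).Nontrivial)
    {u : Fin n} (hu : u ∈ commonAnchors f S) : ¬ EssAtSomeSlice f u := by
  intro h
  obtain ⟨c, hc⟩ := h.exists_mem_anchors hfree
  obtain ⟨w, hw, hwu⟩ := hU.exists_ne u
  have hcw : c ≠ w := by
    rintro rfl
    exact hsep u hu c hc hw
  obtain ⟨ν, hνw, hνc, hν⟩ := hfree w c hcw.symm
  have hνu : ν ∈ anchors f u :=
    mem_anchors_of_essAtSlice (hc.2 w hwu hcw.symm).symm hwu.symm hc.1.symm hνw hνc hν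
  have hνS : ν ∈ S := (hcover ν).resolve_right (hsep u hu ν hνu)
  exact hν ((hw ν hνS).2 c hνc.symm hcw)

lemma false_of_saturated (hn : 4 ≤ n) (hall : ∀ p, EssAtOn f (Aneq A n) p)
    (hU : (commonAnchors f S).Nontrivial) : False := by
  obtain ⟨u₁, hu₁, u₂, hu₂, h₁₂⟩ := hU
  obtain ⟨u₃, hu₃, h₃₁, h₃₂⟩ := exists_third_mem_commonAnchors hfree hu₁ hu₂ h₁₂
  have hN := fun u (hu : u ∈ commonAnchors f S) =>
    not_essAtSomeSlice_of_mem_commonAnchors hfree hcover hsep ⟨u₁, hu₁, u₂, hu₂, h₁₂⟩ hu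
  obtain ⟨r, hr⟩ := exists_setOf_not_essAtSomeSlice_subset_pair hn (hall u₁) (hN u₁ hu₁)
  have h₂ : u₂ = r := ((hr (hN u₂ hu₂)).resolve_left h₁₂.symm)
  have h₃ : u₃ = r := ((hr (hN u₃ hu₃)).resolve_left h₃₁)
  exact h₃₂ (h₃.trans h₂.symm)

end Saturated

lemma exists_nontrivial_commonAnchors_insert (hn : 4 ≤ n) (hall : ∀ p, EssAtOn f (Aneq A n) p)
    (hU : (commonAnchors f S).Nontrivial) :
    ∃ k ∉ S, (commonAnchors f (insert k S)).Nontrivial := by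
  simp only [commonAnchors_insert]
  obtain ⟨p, hp, q, hq, hpq⟩ := hU
  by_cases hz : ∃ z, z ∉ S ∧ z ∉ commonAnchors f S
  · obtain ⟨z, hzS, hzU⟩ := hz
    have hzp : z ≠ p := fun h => hzU (h ▸ hp)
    refine ⟨z, hzS, nontrivial_anchors_inter_commonAnchors hfree hp hq hpq hzp
      (fun h => hzU (h ▸ hq)) fun ν hν hνp hνz => ?_⟩
    by_contra h
    exact hzU (mem_commonAnchors_of_not_essAtSlice hp hν hνp.symm hzp hνz.symm h)
  by_cases hv : ∃ u ∈ commonAnchors f S, ∃ v ∈ anchors f u, v ∈ commonAnchors f S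
  · obtain ⟨u, hu, v, hvu, hv⟩ := hv
    have huS : u ∉ S := fun h => (hu u h).1 rfl
    obtain ⟨w, hw, hwu, hwv⟩ := exists_third_mem_commonAnchors hfree hu hv hvu.1.symm
    exact ⟨u, huS, nontrivial_anchors_inter_commonAnchors hfree hv hw hwv.symm hvu.1.symm
      hwu.symm fun ν _ hνv hνu => hvu.2 ν hνu hνv⟩
  push Not at hz hv
  exact (false_of_saturated hfree (fun z => or_iff_not_imp_left.mpr (hz z)) hv hn hall
    ⟨p, hp, q, hq, hpq⟩).elim

end FreeOutsiders

lemma exists_not_essAtOn_Aneq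
    (hfree : ∀ r s : Fin n, r ≠ s → ∃ z, z ≠ r ∧ z ≠ s ∧ ¬ EssAtSlice f z r s) (hn : 4 ≤ n) : ∃ p, ¬ EssAtOn f (Aneq A n) p := by
  by_contra! hall
  have : Nontrivial (Fin n) := Fin.nontrivial_iff_two_le.mpr (by omega)
  have hgrow : ∀ j, ∃ S : Finset (Fin n), S.card = j ∧ (commonAnchors f S).Nontrivial := by
    intro j
    induction j with
    | zero => exact ⟨∅, rfl, by simpa [commonAnchors] using Set.nontrivial_univ⟩
    | succ j ih =>
      obtain ⟨S, rfl, hS⟩ := ih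
      obtain ⟨k, hkS, hk⟩ := exists_nontrivial_commonAnchors_insert hfree hn hall hS
      exact ⟨insert k S, Finset.card_insert_of_notMem hkS, hk⟩
  obtain ⟨S, hS, -⟩ := hgrow (n + 1)
  have := S.card_le_univ
  simp only [Fintype.card_fin] at this
  omega

end Anchors

section ArityGap

variable {A B : Type*} {n : ℕ} {f : (Fin n → A) → B}

lemma apply_eq_of_mem_Aneq (hn : n ≠ 1)
    (h0 : ∀ i j : Fin n, i ≠ j → essArity (idMinor f i j) = 0) {x y : Fin n → A}
    (hx : x ∈ Aneq A n) (hy : y ∈ Aneq A n) : f x = f y := by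
  have hconst : ∀ z ∈ Aneq A n, ∀ v : A, f z = f (fun _ => v) := by
    rintro z (h | ⟨i, j, hij, hz⟩) v
    · exact absurd h hn
    calc f z = idMinor f i j z := by simp [idMinor, ← hz]
      _ = idMinor f i j (fun _ => v) := apply_eq_of_essArity_eq_zero (h0 i j hij) _ _
      _ = f (fun _ => v) := by simp [idMinor]
  obtain ⟨i, -⟩ := Or.resolve_left hx hn
  exact (hconst x hx (x i)).trans (hconst y hy (x i)).symm

lemma exists_not_essAtOn_Aneq_of_essArity_idMinor_le (hn : 3 ≤ n)
    (hminor : ∀ i j : Fin n, i ≠ j → essArity (idMinor f i j) + 3 ≤ n) :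
    ∃ p, ¬ EssAtOn f (Aneq A n) p := by
  by_cases hn4 : 4 ≤ n
  · exact exists_not_essAtOn_Aneq (fun r s hrs => exists_not_essAtSlice hminor hrs) hn4
  · refine ⟨⟨0, by omega⟩, fun ⟨a, b, ha, hb, _, hne⟩ => hne ?_⟩
    exact apply_eq_of_mem_Aneq (by omega) (fun i j hij => by have := hminor i j hij; omega) ha hb

def minorArities (f : (Fin n → A) → B) : Set ℕ :=
  {d | ∃ i j : Fin n, i ≠ j ∧ essArity (idMinor f i j) = d}

lemma arityGap_eq_sub_iff (hn : 2 ≤ n) (hdep : ∀ i, EssAt f i) {m : ℕ} :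
    arityGap f = n - m ↔ IsGreatest (minorArities f) m := by
  have hlt : ∀ i j : Fin n, i ≠ j → essArity (idMinor f i j) < n := fun i j hij =>
    essArity_lt_of_not_essAt (not_essAt_idMinor_self f hij)
  unfold arityGap
  simp only [essArity_eq_of_forall_essAt hdep, hdep, true_and]
  set D : Set ℕ := {d | ∃ i j : Fin n, i ≠ j ∧ d = n - essArity (idMinor f i j)}
  constructor
  · intro hgap
    have : Nontrivial (Fin n) := Fin.nontrivial_iff_two_le.mpr hn
    obtain ⟨i, j, hij⟩ := exists_pair_ne (Fin n)
    obtain ⟨i₀, j₀, hij₀, hd₀⟩ := hgap ▸ Nat.sInf_mem (s := D) ⟨_, i, j, hij, rfl⟩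
    refine ⟨⟨i₀, j₀, hij₀, by have := hlt i₀ j₀ hij₀; omega⟩, ?_⟩
    rintro _ ⟨i, j, hij, rfl⟩
    have := hgap ▸ Nat.sInf_le (s := D) ⟨i, j, hij, rfl⟩
    have := hlt i j hij
    omega
  · rintro ⟨⟨i₀, j₀, hij₀, hm⟩, hmax⟩
    refine IsLeast.csInf_eq ⟨⟨i₀, j₀, hij₀, by rw [hm]⟩, ?_⟩
    rintro _ ⟨i, j, hij, rfl⟩
    have := hmax ⟨i, j, hij, rfl⟩
    omega

lemma qarity_eq_iff {m : ℕ} (hm : m + 3 ≤ n) :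
    qarity f = m ↔ IsGreatest (minorArities f) m := by
  constructor
  · rintro rfl
    obtain ⟨i, j, hij, h⟩ := exists_essArity_idMinor_eq_qarity f (by omega) (by omega)
    exact ⟨⟨i, j, hij, h⟩, by rintro _ ⟨i, j, hij, rfl⟩; exact essArity_idMinor_le_qarity f hij⟩
  · rintro ⟨⟨i₀, j₀, hij₀, rfl⟩, hmax⟩
    obtain ⟨p, hp⟩ := exists_not_essAtOn_Aneq_of_essArity_idMinor_le (by omega)
      fun i j hij => (Nat.add_le_add_right (hmax ⟨i, j, hij, rfl⟩) 3).trans hm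
    obtain ⟨i, j, hij, h⟩ := exists_essArity_idMinor_eq_qarity f (by omega)
      (qarity_lt_of_not_essAtOn (by omega) hp)
    exact le_antisymm (h ▸ hmax ⟨i, j, hij, rfl⟩) (essArity_idMinor_le_qarity f hij₀)

end ArityGap

theorem stmt12_general {A B : Type*} {n m : ℕ}
    (hm : m + 3 ≤ n) (f : (Fin n → A) → B) (hdep : ∀ i : Fin n, EssAt f i) :
    arityGap f = n - m ↔ qarity f = m :=
  (arityGap_eq_sub_iff (by omega) hdep).trans (qarity_eq_iff hm).symm

theorem stmt12 {A B : Type*} [Fintype A] (h2 : 2 ≤ Fintype.card A) {n m : ℕ}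
    (hm : m + 3 ≤ n) (f : (Fin n → A) → B) (hdep : ∀ i : Fin n, EssAt f i) :
    arityGap f = n - m ↔ qarity f = m :=
  stmt12_general hm f hdep
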